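/- A geometry X is a projective space if and only if for any two finite-dimensional subspaces S₁, S₂ ⊆ X the dimension formula holds: dim S₁ + dim S₂ = dim(S₁∨S₂) + dim(S₁∩S₂). -/
import Mathlib


/-- A *geometry*: a closure space presented by its family of subspaces, satisfying
axioms G1 (∅, univ, singletons are subspaces), G2 (intersections of subspaces are
subspaces), G3 (MacLane–Steinitz exchange: no subspace strictly between `S` and `S ∨ x`)
and G4 (finitary). -/
structure GeometryOn (X : Type*) where
  IsSubspace : Set X → Prop
  empty_isSubspace : IsSubspace ∅
  univ_isSubspace : IsSubspace Set.univ
  singleton_isSubspace : ∀ x : X, IsSubspace {x}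
  sInter_isSubspace : ∀ 𝒮 : Set (Set X), (∀ S ∈ 𝒮, IsSubspace S) → IsSubspace (⋂₀ 𝒮)
  exchange : ∀ (S : Set X) (x : X), IsSubspace S → x ∉ S →
    ¬ ∃ S' : Set X, IsSubspace S' ∧ S ⊂ S' ∧ S' ⊂ ⋂₀ {T | IsSubspace T ∧ S ∪ {x} ⊆ T}
  finitary : ∀ (A : Set X) (x : X), x ∈ ⋂₀ {T | IsSubspace T ∧ A ⊆ T} →
    ∃ F : Finset X, ↑F ⊆ A ∧ x ∈ ⋂₀ {T | IsSubspace T ∧ ↑F ⊆ T}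

namespace GeometryOn

variable {X X' : Type*}

/-- The closure of `A`: the least subspace containing `A`. -/
def cl (G : GeometryOn X) (A : Set X) : Set X := ⋂₀ {T | G.IsSubspace T ∧ A ⊆ T}

/-- `A` is independent: no point of `A` lies in the closure of the remaining ones. -/
def Independent (G : GeometryOn X) (A : Set X) : Prop := ∀ a ∈ A, a ∉ G.cl (A \ {a})

/-- `B` is a basis of the subspace `S`: independent and generating `S`. -/
def IsBasisOf (G : GeometryOn X) (B S : Set X) : Prop :=
  B ⊆ S ∧ G.Independent B ∧ G.cl B = S

/-- `S` has (finite) dimension `d ∈ ℤ`: it has a basis with `d + 1` elements. -/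
def HasDimZ (G : GeometryOn X) (S : Set X) (d : ℤ) : Prop :=
  ∃ B : Finset X, G.IsBasisOf ↑B S ∧ (B.card : ℤ) = d + 1

/-- A morphism of geometries: preimages of subspaces are subspaces. -/
def IsMorphism (G : GeometryOn X) (G' : GeometryOn X') (φ : X → X') : Prop :=
  ∀ S' : Set X', G'.IsSubspace S' → G.IsSubspace (φ ⁻¹' S')

end GeometryOn

namespace GeometryOn

/-- A geometry is generated by lines: subspaces are exactly the subsets containing the
line through any two of their points. -/
def GeneratedByLines {X : Type*} (G : GeometryOn X) : Prop :=
  ∀ S : Set X, G.IsSubspace S ↔ ∀ x₁ ∈ S, ∀ x₂ ∈ S, G.cl {x₁, x₂} ⊆ S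

/-- A geometry is a projective space: it is generated by its lines (the closures of
pairs of distinct points, each containing at least the two points), and the
Veblen–Young axiom holds: a line meeting two sides of a (nondegenerate) triangle,
not in their common vertex, meets the third side. -/
def IsProjective {X : Type*} (G : GeometryOn X) : Prop :=
  G.GeneratedByLines ∧
  ∀ a b c p q : X,
    a ∉ G.cl {b, c} → b ∉ G.cl {a, c} → c ∉ G.cl {a, b} →
    p ∈ G.cl {a, b} → q ∈ G.cl {a, c} → p ≠ a → q ≠ a → p ≠ q →
    (G.cl {p, q} ∩ G.cl {b, c}).Nonempty

end GeometryOn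


namespace GeometryOn

variable {X : Type*} {G : GeometryOn X}

lemma cl_isSubspace (G : GeometryOn X) (A : Set X) : G.IsSubspace (G.cl A) :=
  G.sInter_isSubspace _ (fun _ hS => hS.1)

lemma subset_cl (G : GeometryOn X) (A : Set X) : A ⊆ G.cl A :=
  fun _ hx => Set.mem_sInter.2 fun _ hT => hT.2 hx

lemma cl_subset {T : Set X} (hT : G.IsSubspace T) {A : Set X} (hAT : A ⊆ T) :
    G.cl A ⊆ T :=
  Set.sInter_subset_of_mem ⟨hT, hAT⟩

lemma cl_mono {A B : Set X} (h : A ⊆ B) : G.cl A ⊆ G.cl B :=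
  cl_subset (G.cl_isSubspace B) (h.trans (G.subset_cl B))

lemma cl_eq_self {S : Set X} (hS : G.IsSubspace S) : G.cl S = S :=
  subset_antisymm (cl_subset hS subset_rfl) (G.subset_cl S)

lemma cl_cl (G : GeometryOn X) (A : Set X) : G.cl (G.cl A) = G.cl A :=
  cl_eq_self (G.cl_isSubspace A)

lemma cl_subset_cl_iff {A B : Set X} : G.cl A ⊆ G.cl B ↔ A ⊆ G.cl B :=
  ⟨fun h => (G.subset_cl A).trans h, fun h => cl_subset (G.cl_isSubspace B) h⟩

lemma cl_empty (G : GeometryOn X) : G.cl ∅ = ∅ := cl_eq_self G.empty_isSubspace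

lemma cl_singleton (G : GeometryOn X) (x : X) : G.cl {x} = {x} :=
  cl_eq_self (G.singleton_isSubspace x)

lemma cl_union_cl_cl (G : GeometryOn X) (A B : Set X) :
    G.cl (G.cl A ∪ G.cl B) = G.cl (A ∪ B) := by
  apply subset_antisymm
  · exact cl_subset_cl_iff.2 (Set.union_subset
      (cl_mono Set.subset_union_left) (cl_mono Set.subset_union_right))
  · exact cl_mono (Set.union_subset_union (G.subset_cl A) (G.subset_cl B))

lemma cl_union_cl_left (G : GeometryOn X) (A B : Set X) :
    G.cl (G.cl A ∪ B) = G.cl (A ∪ B) := by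
  conv_lhs => rw [← G.cl_union_cl_cl (G.cl A) B, G.cl_cl, G.cl_union_cl_cl]

lemma cl_insert_cl (G : GeometryOn X) (a : X) (A : Set X) :
    G.cl (insert a (G.cl A)) = G.cl (insert a A) := by
  rw [Set.insert_eq, Set.insert_eq, ← G.cl_union_cl_cl {a} (G.cl A), G.cl_cl,
    G.cl_union_cl_cl]

lemma cl_insert_of_mem_cl {a : X} {A : Set X} (h : a ∈ G.cl A) :
    G.cl (insert a A) = G.cl A := by
  apply subset_antisymm
  · exact cl_subset (G.cl_isSubspace A) (Set.insert_subset h (G.subset_cl A))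
  · exact cl_mono (Set.subset_insert a A)

lemma inter_isSubspace {S T : Set X} (hS : G.IsSubspace S) (hT : G.IsSubspace T) :
    G.IsSubspace (S ∩ T) := by
  have := G.sInter_isSubspace {S, T} (by rintro U (rfl | rfl) <;> assumption)
  rwa [Set.sInter_pair] at this

/-- The covering form of the exchange axiom. -/
lemma cl_insert_eq_of_mem {S : Set X} (hS : G.IsSubspace S) {x y : X} (hx : x ∉ S)
    (hy : y ∈ G.cl (insert x S)) (hyS : y ∉ S) :
    G.cl (insert y S) = G.cl (insert x S) := by
  have hsub : G.cl (insert y S) ⊆ G.cl (insert x S) :=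
    cl_subset (G.cl_isSubspace _) (Set.insert_subset hy
      ((Set.subset_insert x S).trans (G.subset_cl _)))
  by_contra hne
  apply G.exchange S x hS hx
  refine ⟨G.cl (insert y S), G.cl_isSubspace _, ?_, ?_⟩
  · constructor
    · exact (Set.subset_insert y S).trans (G.subset_cl _)
    · intro hcon
      exact hyS (hcon (G.subset_cl _ (Set.mem_insert y S)))
  · rw [Set.union_singleton]
    exact ⟨hsub, fun h => hne (subset_antisymm hsub h)⟩

/-- Exchange property for the closure operator. -/
lemma cl_exchange {A : Set X} {a b : X} (h : a ∈ G.cl (insert b A))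
    (ha : a ∉ G.cl A) : b ∈ G.cl (insert a A) := by
  have hbA : b ∉ G.cl A := fun hb => ha (by rwa [cl_insert_of_mem_cl hb] at h)
  have h1 : a ∈ G.cl (insert b (G.cl A)) := by rwa [G.cl_insert_cl]
  have h2 := cl_insert_eq_of_mem (G.cl_isSubspace A) hbA h1 ha
  have : b ∈ G.cl (insert a (G.cl A)) := by
    rw [h2]; exact G.subset_cl _ (Set.mem_insert b _)
  rwa [G.cl_insert_cl] at this

lemma finitary' {A : Set X} {x : X} (h : x ∈ G.cl A) :
    ∃ F : Finset X, ↑F ⊆ A ∧ x ∈ G.cl ↑F :=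
  G.finitary A x h

end GeometryOn


namespace GeometryOn

open scoped Classical

variable {X : Type*} {G : GeometryOn X}

lemma indep_mono {A B : Set X} (hA : G.Independent A) (h : B ⊆ A) :
    G.Independent B :=
  fun b hb hmem => hA b (h hb) (cl_mono (Set.diff_subset_diff_left h) hmem)

lemma indep_empty (G : GeometryOn X) : G.Independent ∅ := fun a ha => absurd ha (by simp)

lemma indep_empty' (G : GeometryOn X) : G.Independent ↑(∅ : Finset X) := by
  rw [Finset.coe_empty]; exact G.indep_empty

lemma indep_insert {A : Set X} (hA : G.Independent A) {x : X} (hx : x ∉ G.cl A) :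
    G.Independent (insert x A) := by
  have hxA : x ∉ A := fun h => hx (G.subset_cl A h)
  intro a ha
  rcases Set.mem_insert_iff.1 ha with rfl | haA
  · have : insert a A \ {a} ⊆ A := by
      intro y hy
      rcases Set.mem_insert_iff.1 hy.1 with rfl | h
      · exact absurd rfl hy.2
      · exact h
    exact fun hm => hx (cl_mono this hm)
  · by_cases hax : a = x
    · exact absurd (hax ▸ haA) hxA
    intro hmem
    have hset : insert x A \ {a} = insert x (A \ {a}) := by
      rw [Set.insert_diff_of_notMem _ (by simp [Ne.symm hax])]
    rw [hset] at hmem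
    have haA' : a ∉ G.cl (A \ {a}) := hA a haA
    have := cl_exchange hmem haA'
    rw [Set.insert_diff_singleton, Set.insert_eq_self.2 haA] at this
    exact hx this

/-- Every finite set contains an independent subset with the same closure. -/
lemma exists_indep_subset (G : GeometryOn X) (F : Finset X) :
    ∃ B : Finset X, B ⊆ F ∧ G.Independent ↑B ∧ G.cl ↑B = G.cl ↑F := by
  induction F using Finset.induction_on with
  | empty => exact ⟨∅, subset_rfl, G.indep_empty', rfl⟩
  | @insert a F haF ih =>
    obtain ⟨B, hBF, hBi, hBcl⟩ := ih
    by_cases ha : a ∈ G.cl ↑B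
    · refine ⟨B, fun x hx => Finset.mem_insert_of_mem (hBF hx), hBi, ?_⟩
      have haF' : a ∈ G.cl ↑F := hBcl ▸ ha
      rw [Finset.coe_insert, cl_insert_of_mem_cl haF']
      exact hBcl
    · refine ⟨insert a B, Finset.insert_subset_insert a hBF, ?_, ?_⟩
      · rw [Finset.coe_insert]; exact indep_insert hBi ha
      · rw [Finset.coe_insert, Finset.coe_insert]
        apply subset_antisymm
        · exact cl_mono (Set.insert_subset_insert
            (fun x hx => Finset.mem_coe.2 (hBF (Finset.mem_coe.1 hx))))
        · rw [← G.cl_insert_cl a ↑F, ← hBcl, G.cl_insert_cl]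

/-- Basis extension: any independent finite set extends to a basis of the closure
of its union with any finite set. -/
lemma exists_indep_ext (G : GeometryOn X) (F : Finset X) :
    ∀ B : Finset X, G.Independent ↑B →
      ∃ C : Finset X, B ⊆ C ∧ ↑C ⊆ (↑B ∪ ↑F : Set X) ∧ G.Independent ↑C ∧
        G.cl ↑C = G.cl (↑B ∪ ↑F) := by
  induction F using Finset.induction_on with
  | empty => intro B hB; exact ⟨B, subset_rfl, by simp, hB, by simp⟩
  | @insert a F haF ih =>
    intro B hB
    obtain ⟨C, hBC, hCsub, hCi, hCcl⟩ := ih B hB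
    have hins : (↑B ∪ ↑(insert a F) : Set X) = insert a (↑B ∪ ↑F) := by
      rw [Finset.coe_insert, Set.union_insert]
    by_cases ha : a ∈ G.cl ↑C
    · refine ⟨C, hBC, ?_, hCi, ?_⟩
      · exact hCsub.trans (by rw [hins]; exact (Set.subset_insert _ _))
      · rw [hins, cl_insert_of_mem_cl (hCcl ▸ ha)]
        exact hCcl
    · refine ⟨insert a C, hBC.trans (Finset.subset_insert a C), ?_, ?_, ?_⟩
      · rw [Finset.coe_insert, hins]
        exact Set.insert_subset_insert hCsub
      · rw [Finset.coe_insert]; exact indep_insert hCi ha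
      · rw [Finset.coe_insert, hins, ← G.cl_insert_cl a (↑B ∪ ↑F), ← hCcl, G.cl_insert_cl]

/-- Steinitz exchange: an independent set in the span of `C` has at most `|C|` elements. -/
lemma card_le_of_indep_subset_cl :
    ∀ (n : ℕ) (B C : Finset X), (B \ C).card = n → G.Independent ↑B →
      ↑B ⊆ G.cl ↑C → B.card ≤ C.card := by
  intro n
  induction n with
  | zero =>
    intro B C hcard _ _
    have hsub : B ⊆ C := by
      rw [← Finset.sdiff_eq_empty_iff_subset]
      exact Finset.card_eq_zero.1 hcard
    exact Finset.card_le_card hsub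
  | succ n ih =>
    intro B C hcard hBi hBC
    have hne : (B \ C).Nonempty := by
      rw [← Finset.card_pos, hcard]; exact Nat.succ_pos n
    obtain ⟨b, hb⟩ := hne
    obtain ⟨hbB, hbC⟩ := Finset.mem_sdiff.1 hb
    have : ∃ c ∈ C, c ∉ G.cl ↑(B.erase b) := by
      by_contra h
      push_neg at h
      have hCsub : (↑C : Set X) ⊆ G.cl ↑(B.erase b) := fun c hc => h c hc
      have hbmem : b ∈ G.cl ↑(B.erase b) :=
        (cl_subset (G.cl_isSubspace _) hCsub) (hBC (Finset.mem_coe.2 hbB))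
      have hcoe : (↑(B.erase b) : Set X) = ↑B \ {b} := by
        simp [Finset.coe_erase]
      rw [hcoe] at hbmem
      exact hBi b hbB hbmem
    obtain ⟨c, hcC, hc⟩ := this
    have hcB : c ∉ B := by
      intro hcB
      have hcb : c ≠ b := fun h => hbC (h ▸ hcC)
      exact hc (G.subset_cl _ (Finset.mem_coe.2 (Finset.mem_erase.2 ⟨hcb, hcB⟩)))
    set B' := insert c (B.erase b) with hB'
    have hB'i : G.Independent ↑B' := by
      rw [hB', Finset.coe_insert]
      refine indep_insert (indep_mono hBi ?_) hc
      rw [Finset.coe_erase]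
      exact Set.diff_subset
    have hB'sub : ↑B' ⊆ G.cl ↑C := by
      rw [hB', Finset.coe_insert]
      apply Set.insert_subset (G.subset_cl _ hcC)
      refine Set.Subset.trans ?_ hBC
      rw [Finset.coe_erase]
      exact Set.diff_subset
    have hB'card : (B' \ C).card = n := by
      have h1 : B' \ C = (B.erase b) \ C := by
        rw [hB', Finset.insert_sdiff_of_mem _ hcC]
      have h2 : (B.erase b) \ C = (B \ C).erase b := by
        ext x; simp [Finset.mem_erase, Finset.mem_sdiff]; tauto
      rw [h1, h2, Finset.card_erase_of_mem hb, hcard]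
      omega
    have hpos : 0 < B.card := Finset.card_pos.2 ⟨b, hbB⟩
    have hcard' : B'.card = B.card := by
      rw [hB', Finset.card_insert_of_notMem (fun h => hcB (Finset.erase_subset _ _ h)),
        Finset.card_erase_of_mem hbB]
      omega
    calc B.card = B'.card := hcard'.symm
      _ ≤ C.card := ih B' C hB'card hB'i hB'sub

lemma card_le_of_indep_subset_cl' {B C : Finset X} (hBi : G.Independent ↑B)
    (hBC : ↑B ⊆ G.cl ↑C) : B.card ≤ C.card :=
  card_le_of_indep_subset_cl _ B C rfl hBi hBC

/-- Any two finite bases of the same set have the same cardinality. -/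
lemma basis_card_eq {B C : Finset X} {S : Set X} (hB : G.IsBasisOf ↑B S)
    (hC : G.IsBasisOf ↑C S) : B.card = C.card := by
  obtain ⟨hB1, hB2, hB3⟩ := hB
  obtain ⟨hC1, hC2, hC3⟩ := hC
  exact le_antisymm
    (card_le_of_indep_subset_cl' hB2 (hC3.symm ▸ hB1))
    (card_le_of_indep_subset_cl' hC2 (hB3.symm ▸ hC1))

/-- A subspace contained in a finitely generated one has a finite basis. -/
lemma exists_finite_basis {S : Set X} (hS : G.IsSubspace S) {F : Finset X}
    (hSF : S ⊆ G.cl ↑F) : ∃ B : Finset X, G.IsBasisOf ↑B S := by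
  by_contra h
  push_neg at h
  have key : ∀ B : Finset X, ↑B ⊆ S → G.Independent ↑B →
      ∃ x ∈ S, x ∉ G.cl ↑B := by
    intro B hBS hBi
    by_contra hx
    push_neg at hx
    exact h B ⟨hBS, hBi, subset_antisymm (cl_subset hS hBS) hx⟩
  have grow : ∀ n : ℕ, ∃ B : Finset X, ↑B ⊆ S ∧ G.Independent ↑B ∧ B.card = n := by
    intro n
    induction n with
    | zero => exact ⟨∅, by simp, G.indep_empty', rfl⟩
    | succ n ih =>
      obtain ⟨B, hBS, hBi, hBc⟩ := ih
      obtain ⟨x, hxS, hx⟩ := key B hBS hBi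
      refine ⟨insert x B, ?_, ?_, ?_⟩
      · rw [Finset.coe_insert]; exact Set.insert_subset hxS hBS
      · rw [Finset.coe_insert]; exact indep_insert hBi hx
      · rw [Finset.card_insert_of_notMem (fun hm => hx (G.subset_cl _ hm)), hBc]
  obtain ⟨B, hBS, hBi, hBc⟩ := grow (F.card + 1)
  have := card_le_of_indep_subset_cl' hBi (fun x hx => (hSF (hBS hx)))
  omega

end GeometryOn
namespace GeometryOn

variable {X : Type*} {G : GeometryOn X}

lemma mem_cl_pair_left (G : GeometryOn X) (x y : X) : x ∈ G.cl {x, y} :=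
  G.subset_cl _ (Set.mem_insert x {y})

lemma mem_cl_pair_right (G : GeometryOn X) (x y : X) : y ∈ G.cl {x, y} :=
  G.subset_cl _ (Set.mem_insert_of_mem x rfl)

lemma cl_pair_comm (G : GeometryOn X) (x y : X) : G.cl {x, y} = G.cl {y, x} := by
  rw [Set.pair_comm]

lemma cl_pair_subset {S : Set X} (hS : G.IsSubspace S) {x y : X} (hx : x ∈ S)
    (hy : y ∈ S) : G.cl {x, y} ⊆ S :=
  cl_subset hS (Set.insert_subset hx (Set.singleton_subset_iff.2 hy))

/-- Exchange on a line: if `z` lies on the line `xy` and `z ≠ x`, then `y` lies on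
the line `xz`. -/
lemma mem_cl_pair_exchange {x y z : X} (h : z ∈ G.cl {x, y}) (hz : z ≠ x) :
    y ∈ G.cl {x, z} := by
  have h' : z ∈ G.cl (insert y {x}) := by rwa [← Set.pair_comm x y]
  have hzx : z ∉ G.cl {x} := by rw [G.cl_singleton]; simpa using hz
  have hy := cl_exchange h' hzx
  rw [Set.pair_comm x z]
  exact hy

lemma cl_pair_eq {x y z : X} (h : z ∈ G.cl {x, y}) (hz : z ≠ x) :
    G.cl {x, z} = G.cl {x, y} := by
  apply subset_antisymm
  · exact cl_pair_subset (G.cl_isSubspace _) (G.mem_cl_pair_left x y) h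
  · exact cl_pair_subset (G.cl_isSubspace _) (G.mem_cl_pair_left x z)
      (mem_cl_pair_exchange h hz)

/-- Auxiliary degenerate case of the key lemma: the apex of the cone lies in `L`. -/
lemma core_aux (hP : G.IsProjective) {L : Set X} (hL : G.IsSubspace L)
    {c p w₂ q z : X} (hc : c ∉ L) (hp : p ∈ L) (hw₂ : w₂ ∈ L)
    (hq : q ∈ G.cl {w₂, c}) (hqL : q ∉ L) (hz : z ∈ G.cl {p, q}) :
    ∃ w ∈ L, z ∈ G.cl {w, c} := by
  by_cases hqc : q = c
  · exact ⟨p, hp, by rwa [hqc] at hz⟩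
  have hqw₂ : q ≠ w₂ := fun h => hqL (h ▸ hw₂)
  have hcq : c ∈ G.cl {w₂, q} := mem_cl_pair_exchange hq hqw₂
  by_cases hzl : z ∈ G.cl {w₂, c}
  · exact ⟨w₂, hw₂, hzl⟩
  by_cases hpw : p = w₂
  · subst hpw
    exact ⟨p, hp, cl_pair_subset (G.cl_isSubspace {p, c}) (G.mem_cl_pair_left p c) hq hz⟩
  -- nondegeneracy for Veblen–Young with triangle (q, p, w₂)
  have h1 : q ∉ G.cl {p, w₂} := fun hm => hqL (cl_pair_subset hL hp hw₂ hm)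
  have h2 : p ∉ G.cl {q, w₂} := by
    intro hm
    rw [Set.pair_comm] at hm
    have := mem_cl_pair_exchange hm hpw
    exact hqL (cl_pair_subset hL hw₂ hp this)
  have h3 : w₂ ∉ G.cl {q, p} := by
    intro hm
    rw [Set.pair_comm] at hm
    have hw₂p : w₂ ≠ p := fun h => hpw h.symm
    have := mem_cl_pair_exchange hm hw₂p
    exact hqL (cl_pair_subset hL hp hw₂ this)
  have hzq : z ≠ q := fun h => hzl (h ▸ hq)
  have hcq' : c ≠ q := Ne.symm hqc
  have hzc : z ≠ c := fun h => hzl (h ▸ G.mem_cl_pair_right w₂ c)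
  obtain ⟨u, hu1, hu2⟩ := hP.2 q p w₂ z c h1 h2 h3
    (by rwa [Set.pair_comm] at hz) (by rwa [Set.pair_comm] at hcq) hzq hcq' hzc
  have huL : u ∈ L := cl_pair_subset hL hp hw₂ hu2
  have huc : u ≠ c := fun h => hc (h ▸ huL)
  have : z ∈ G.cl {c, u} := by
    rw [Set.pair_comm z c] at hu1
    exact mem_cl_pair_exchange hu1 huc
  exact ⟨u, huL, by rwa [Set.pair_comm]⟩

/-- Main case of the key lemma: double application of Veblen–Young. -/
lemma core_main (hP : G.IsProjective) {L : Set X} (hL : G.IsSubspace L)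
    {c w₁ w₂ p q z : X} (hc : c ∉ L) (hw₁ : w₁ ∈ L) (hw₂ : w₂ ∈ L)
    (hp : p ∈ G.cl {w₁, c}) (hq : q ∈ G.cl {w₂, c})
    (hpL : p ∉ L) (hqL : q ∉ L)
    (hq1 : q ∉ G.cl {w₁, c})
    (hz1 : z ∉ G.cl {w₁, c}) (hz2 : z ∉ G.cl {w₂, c})
    (hz : z ∈ G.cl {p, q}) :
    ∃ w ∈ L, z ∈ G.cl {w, c} := by
  have hpc : p ≠ c := by
    intro h
    rw [h] at hz
    exact hz2 (cl_pair_subset (G.cl_isSubspace _) (G.mem_cl_pair_right w₂ c) hq hz)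
  have hqc : q ≠ c := by
    intro h
    rw [h] at hq1
    exact hq1 (G.mem_cl_pair_right w₁ c)
  have hpw₁ : p ≠ w₁ := fun h => hpL (h ▸ hw₁)
  have hqw₂ : q ≠ w₂ := fun h => hqL (h ▸ hw₂)
  have hzp : z ≠ p := fun h => hz1 (h ▸ hp)
  have hzq : z ≠ q := fun h => hz2 (h ▸ hq)
  have hzc : z ≠ c := fun h => hz1 (h ▸ G.mem_cl_pair_right w₁ c)
  have hcpw₁ : c ∈ G.cl {w₁, p} := mem_cl_pair_exchange hp hpw₁
  have hcqw₂ : c ∈ G.cl {w₂, q} := mem_cl_pair_exchange hq hqw₂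
  have hsub1 : G.cl {w₁, p} ⊆ G.cl {w₁, c} :=
    cl_pair_subset (G.cl_isSubspace _) (G.mem_cl_pair_left w₁ c) hp
  -- VY triangle (p, w₁, q) with points c ∈ pw₁, z ∈ pq
  have hA : p ∉ G.cl {w₁, q} := by
    intro hm
    have hthis := mem_cl_pair_exchange hm hpw₁
    exact hq1 (hsub1 hthis)
  have hB : w₁ ∉ G.cl {p, q} := by
    intro hm
    have hthis := mem_cl_pair_exchange hm (Ne.symm hpw₁)
    rw [Set.pair_comm p w₁] at hthis
    exact hq1 (hsub1 hthis)
  have hC : q ∉ G.cl {p, w₁} := fun hm => hq1 (hsub1 (by rwa [Set.pair_comm p w₁] at hm))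
  obtain ⟨u, hu1, hu2⟩ := hP.2 p w₁ q c z hA hB hC
    (by rwa [Set.pair_comm w₁ p] at hcpw₁) hz (Ne.symm hpc) hzp (Ne.symm hzc)
  -- u ∈ cl {c, z} ∩ cl {w₁, q}
  have huc : u ≠ c := by
    intro h
    rw [h] at hu2
    have hcw₁ : (c : X) ≠ w₁ := fun hh => hc (hh ▸ hw₁)
    exact hq1 (mem_cl_pair_exchange hu2 hcw₁)
  have hzu : z ∈ G.cl {c, u} := mem_cl_pair_exchange hu1 huc
  by_cases huL : u ∈ L
  · exact ⟨u, huL, by rwa [Set.pair_comm]⟩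
  have huq : u ≠ q := by
    intro h
    rw [h] at hzu
    have hq' : q ∈ G.cl {c, w₂} := by rwa [Set.pair_comm w₂ c] at hq
    have hcu : G.cl {c, q} = G.cl {c, w₂} := cl_pair_eq hq' hqc
    rw [hcu, Set.pair_comm c w₂] at hzu
    exact hz2 hzu
  have hw₁w₂ : w₁ ≠ w₂ := by
    rintro rfl
    exact hq1 hq
  -- VY triangle (q, w₁, w₂) with points u ∈ qw₁, c ∈ qw₂
  have hA' : q ∉ G.cl {w₁, w₂} := fun hm => hqL (cl_pair_subset hL hw₁ hw₂ hm)
  have hB' : w₁ ∉ G.cl {q, w₂} := by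
    intro hm
    rw [Set.pair_comm q w₂] at hm
    have hthis := mem_cl_pair_exchange hm hw₁w₂
    exact hqL (cl_pair_subset hL hw₂ hw₁ hthis)
  have hC' : w₂ ∉ G.cl {q, w₁} := by
    intro hm
    rw [Set.pair_comm q w₁] at hm
    have hthis := mem_cl_pair_exchange hm (Ne.symm hw₁w₂)
    exact hqL (cl_pair_subset hL hw₁ hw₂ hthis)
  obtain ⟨v, hv1, hv2⟩ := hP.2 q w₁ w₂ u c hA' hB' hC'
    (by rwa [Set.pair_comm w₁ q] at hu2) (by rwa [Set.pair_comm w₂ q] at hcqw₂)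
    huq (Ne.symm hqc) huc
  have hvL : v ∈ L := cl_pair_subset hL hw₁ hw₂ hv2
  have hvc : v ≠ c := fun h => hc (h ▸ hvL)
  have huv : u ∈ G.cl {c, v} := by
    rw [Set.pair_comm u c] at hv1
    exact mem_cl_pair_exchange hv1 hvc
  have : z ∈ G.cl {c, v} :=
    cl_pair_subset (G.cl_isSubspace _) (G.mem_cl_pair_left c v) huv hzu
  exact ⟨v, hvL, by rwa [Set.pair_comm]⟩

/-- Key lemma: every point of `⟨L, c⟩` lies on a line joining `c` to a point of `L`. -/
lemma core (hP : G.IsProjective) {L : Set X} (hL : G.IsSubspace L)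
    (hLne : L.Nonempty) {c z : X} (hz : z ∈ G.cl (insert c L)) :
    ∃ w ∈ L, z ∈ G.cl {w, c} := by
  obtain ⟨w₀, hw₀⟩ := hLne
  set R := {t : X | ∃ w ∈ L, t ∈ G.cl {w, c}} with hR
  have hsubR : insert c L ⊆ R := by
    rintro t (rfl | htL)
    · exact ⟨w₀, hw₀, G.mem_cl_pair_right w₀ t⟩
    · exact ⟨t, htL, G.mem_cl_pair_left t c⟩
  have hRsub : G.IsSubspace R := by
    rw [hP.1 R]
    rintro p ⟨w₁, hw₁, hp⟩ q ⟨w₂, hw₂, hq⟩ t ht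
    by_cases hcL : c ∈ L
    · have hpL : p ∈ L := cl_pair_subset hL hw₁ hcL hp
      have hqL : q ∈ L := cl_pair_subset hL hw₂ hcL hq
      have htL : t ∈ L := cl_pair_subset hL hpL hqL ht
      exact ⟨t, htL, G.mem_cl_pair_left t c⟩
    by_cases htL : t ∈ L
    · exact ⟨t, htL, G.mem_cl_pair_left t c⟩
    by_cases h1 : t ∈ G.cl {w₁, c}
    · exact ⟨w₁, hw₁, h1⟩
    by_cases h2 : t ∈ G.cl {w₂, c}
    · exact ⟨w₂, hw₂, h2⟩
    by_cases hpm : p ∈ G.cl {w₂, c}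
    · exact ⟨w₂, hw₂, cl_pair_subset (G.cl_isSubspace _) hpm hq ht⟩
    by_cases hqm : q ∈ G.cl {w₁, c}
    · exact ⟨w₁, hw₁, cl_pair_subset (G.cl_isSubspace _) hp hqm ht⟩
    by_cases hpL : p ∈ L
    · by_cases hqL : q ∈ L
      · exact ⟨t, cl_pair_subset hL hpL hqL ht, G.mem_cl_pair_left t c⟩
      · exact core_aux hP hL hcL hpL hw₂ hq hqL ht
    by_cases hqL : q ∈ L
    · exact core_aux hP hL hcL hqL hw₁ hp hpL (by rwa [Set.pair_comm] at ht)
    · exact core_main hP hL hcL hw₁ hw₂ hp hq hpL hqL hqm h1 h2 ht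
  exact cl_subset hRsub hsubR hz

/-- Join of two subspaces as union of lines. -/
lemma join_lines (hP : G.IsProjective) {S₁ S₂ : Set X} (h₁ : G.IsSubspace S₁)
    (h₂ : G.IsSubspace S₂) (hne₁ : S₁.Nonempty) (hne₂ : S₂.Nonempty) {z : X}
    (hz : z ∈ G.cl (S₁ ∪ S₂)) : ∃ x ∈ S₁, ∃ y ∈ S₂, z ∈ G.cl {x, y} := by
  classical
  obtain ⟨x₀, hx₀⟩ := hne₁
  obtain ⟨y₀, hy₀⟩ := hne₂
  have aux : ∀ F : Finset X, ↑F ⊆ S₁ ∪ S₂ →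
      ∀ t ∈ G.cl (↑F ∪ S₂), ∃ x ∈ S₁, ∃ y ∈ S₂, t ∈ G.cl {x, y} := by
    intro F
    induction F using Finset.induction_on with
    | empty =>
      intro _ t ht
      rw [Finset.coe_empty, Set.empty_union, cl_eq_self h₂] at ht
      exact ⟨x₀, hx₀, t, ht, G.mem_cl_pair_right x₀ t⟩
    | @insert a F haF ih =>
      intro hsub t ht
      have hFsub : (↑F : Set X) ⊆ S₁ ∪ S₂ :=
        fun x hx => hsub (Finset.mem_coe.2 (Finset.mem_insert_of_mem (Finset.mem_coe.1 hx)))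
      have hins : (↑(insert a F) ∪ S₂ : Set X) = insert a (↑F ∪ S₂) := by
        rw [Finset.coe_insert, Set.insert_union]
      rw [hins] at ht
      rcases hsub (Finset.mem_coe.2 (Finset.mem_insert_self a F)) with haS₁ | haS₂
      · have hL'ne : (G.cl (↑F ∪ S₂)).Nonempty :=
          ⟨y₀, G.subset_cl _ (Set.mem_union_right _ hy₀)⟩
        have ht' : t ∈ G.cl (insert a (G.cl (↑F ∪ S₂))) := by
          rwa [G.cl_insert_cl]
        obtain ⟨w, hw, hwt⟩ := core hP (G.cl_isSubspace _) hL'ne ht'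
        obtain ⟨x', hx', y', hy', hw'⟩ := ih hFsub w hw
        -- t ∈ cl {w, a}, w ∈ cl {x', y'}
        have hwin : w ∈ G.cl (insert y' {a, x'}) := by
          refine cl_mono ?_ hw'
          intro s hs
          simp only [Set.mem_insert_iff, Set.mem_singleton_iff] at hs ⊢
          tauto
        have htin : t ∈ G.cl (insert y' (G.cl {a, x'})) := by
          rw [G.cl_insert_cl]
          refine cl_pair_subset (G.cl_isSubspace _) hwin ?_ hwt
          exact G.subset_cl _ (Set.mem_insert_of_mem _ (Set.mem_insert a {x'}))
        have hax'ne : (G.cl {a, x'}).Nonempty := ⟨a, G.mem_cl_pair_left a x'⟩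
        obtain ⟨w', hw'', hwt'⟩ := core hP (G.cl_isSubspace _) hax'ne htin
        exact ⟨w', cl_pair_subset h₁ haS₁ hx' hw'', y', hy', hwt'⟩
      · rw [Set.insert_eq_self.2 (Set.mem_union_right _ haS₂)] at ht
        exact ih hFsub t ht
  obtain ⟨F, hFsub, hzF⟩ := finitary' hz
  exact aux F hFsub z (cl_mono Set.subset_union_left hzF)

/-- The modular law. -/
lemma modular (hP : G.IsProjective) {S₁ S₂ A : Set X} (h₁ : G.IsSubspace S₁)
    (h₂ : G.IsSubspace S₂) (hA : G.IsSubspace A) (hAS : A ⊆ S₁) :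
    S₁ ∩ G.cl (A ∪ S₂) ⊆ G.cl (A ∪ (S₁ ∩ S₂)) := by
  rcases Set.eq_empty_or_nonempty S₂ with rfl | hne₂
  · rw [Set.union_empty, cl_eq_self hA]
    exact Set.inter_subset_right.trans ((Set.subset_union_left).trans (G.subset_cl _))
  rcases Set.eq_empty_or_nonempty A with rfl | hneA
  · rw [Set.empty_union, cl_eq_self h₂, Set.empty_union]
    exact G.subset_cl _
  rintro z ⟨hz1, hz2⟩
  obtain ⟨x, hx, y, hy, hzxy⟩ := join_lines hP hA h₂ hneA hne₂ hz2
  by_cases hzx : z = x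
  · exact G.subset_cl _ (Set.mem_union_left _ (hzx ▸ hx))
  have hy' : y ∈ G.cl {x, z} := mem_cl_pair_exchange hzxy hzx
  have hyS₁ : y ∈ S₁ := cl_pair_subset h₁ (hAS hx) hz1 hy'
  refine cl_pair_subset (G.cl_isSubspace _) ?_ ?_ hzxy
  · exact G.subset_cl _ (Set.mem_union_left _ hx)
  · exact G.subset_cl _ (Set.mem_union_right _ ⟨hyS₁, hy⟩)

end GeometryOn
namespace GeometryOn

variable {X : Type*} {G : GeometryOn X}

lemma indep_pair {x y : X} (h : x ≠ y) : G.Independent ({x, y} : Set X) := by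
  intro t ht hmem
  rcases ht with rfl | ht
  · have hsub : ({t, y} : Set X) \ {t} ⊆ {y} := by
      intro s hs
      rcases hs.1 with rfl | hs'
      · exact absurd rfl hs.2
      · exact hs'
    have := cl_mono hsub hmem
    rw [G.cl_singleton] at this
    exact h this
  · rw [Set.mem_singleton_iff] at ht
    subst ht
    have hsub : ({x, t} : Set X) \ {t} ⊆ {x} := by
      intro s hs
      rcases hs.1 with rfl | hs'
      · exact rfl
      · exact absurd hs' hs.2
    have := cl_mono hsub hmem
    rw [G.cl_singleton] at this
    exact h this.symm

/-- Independence of the union of compatible bases, via the modular law. -/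
lemma indep_union_aux (hP : G.IsProjective) {S₁ S₂ : Set X} (h₁ : G.IsSubspace S₁)
    (h₂ : G.IsSubspace S₂) {B₀ C₁ C₂ : Finset X}
    (hB₀cl : G.cl ↑B₀ = S₁ ∩ S₂)
    (hC₁i : G.Independent ↑C₁) (hC₁cl : G.cl ↑C₁ = S₁)
    (hC₂i : G.Independent ↑C₂) (hC₂cl : G.cl ↑C₂ = S₂)
    (h₀₁ : (↑B₀ : Set X) ⊆ ↑C₁) (h₀₂ : (↑B₀ : Set X) ⊆ ↑C₂)
    (hInter : (↑C₁ ∩ ↑C₂ : Set X) ⊆ ↑B₀)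
    {b : X} (hb : b ∈ (↑C₁ : Set X)) :
    b ∉ G.cl ((↑C₁ ∪ ↑C₂ : Set X) \ {b}) := by
  intro hmem
  have hC₁S : (↑C₁ : Set X) ⊆ S₁ := hC₁cl ▸ G.subset_cl _
  have hC₂S : (↑C₂ : Set X) ⊆ S₂ := hC₂cl ▸ G.subset_cl _
  have hbS₁ : b ∈ S₁ := hC₁S hb
  set A₁ := G.cl ((↑C₁ : Set X) \ {b}) with hA₁
  have hA₁S : A₁ ⊆ S₁ := cl_subset h₁ (Set.diff_subset.trans hC₁S)
  rw [Set.union_diff_distrib] at hmem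
  by_cases hbC₂ : b ∈ (↑C₂ : Set X)
  · -- b lies in both bases, hence in B₀
    have hbB₀ : b ∈ (↑B₀ : Set X) := hInter ⟨hb, hbC₂⟩
    set A₂ := G.cl ((↑C₂ : Set X) \ {b}) with hA₂
    have hmem' : b ∈ G.cl (A₁ ∪ A₂) := by
      rw [hA₁, hA₂, G.cl_union_cl_cl]
      exact hmem
    have key := modular hP h₁ (G.cl_isSubspace _) (G.cl_isSubspace _) hA₁S ⟨hbS₁, hmem'⟩
    have hS₁A₂ : S₁ ∩ A₂ ⊆ A₁ := by
      rintro t ⟨ht1, ht2⟩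
      have htS₂ : t ∈ S₂ := cl_subset h₂ (Set.diff_subset.trans hC₂S) ht2
      have htB₀ : t ∈ G.cl ↑B₀ := by rw [hB₀cl]; exact ⟨ht1, htS₂⟩
      by_cases h : t ∈ G.cl ((↑B₀ : Set X) \ {b})
      · exact cl_mono (Set.diff_subset_diff_left h₀₁) h
      · exfalso
        have htB₀' : t ∈ G.cl (insert b ((↑B₀ : Set X) \ {b})) := by
          rw [Set.insert_diff_singleton, Set.insert_eq_self.2 hbB₀]
          exact htB₀
        have hexch := cl_exchange htB₀' h
        have : b ∈ A₂ := by
          refine cl_subset (G.cl_isSubspace _) ?_ hexch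
          exact Set.insert_subset ht2
            ((Set.diff_subset_diff_left h₀₂).trans (G.subset_cl _))
        exact hC₂i b hbC₂ this
    have : b ∈ A₁ := by
      refine cl_subset (G.cl_isSubspace _) ?_ key
      exact Set.union_subset subset_rfl hS₁A₂
    exact hC₁i b hb this
  · -- b is only in C₁
    rw [Set.diff_singleton_eq_self hbC₂] at hmem
    have hbB₀ : b ∉ (↑B₀ : Set X) := fun h => hbC₂ (h₀₂ h)
    have hmem' : b ∈ G.cl (A₁ ∪ S₂) :=
      cl_mono (Set.union_subset_union (G.subset_cl _) hC₂S) hmem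
    have key := modular hP h₁ h₂ (G.cl_isSubspace _) hA₁S ⟨hbS₁, hmem'⟩
    have : b ∈ A₁ := by
      have heq : G.cl (A₁ ∪ (S₁ ∩ S₂)) = A₁ := by
        rw [← hB₀cl, hA₁, G.cl_union_cl_cl,
          Set.union_eq_left.2 (Set.subset_diff_singleton h₀₁ hbB₀)]
      rw [heq] at key
      exact key
    exact hC₁i b hb this

/-- Forward direction: the dimension formula holds in a projective geometry. -/
lemma dim_formula_of_projective (hP : G.IsProjective) (S₁ S₂ : Set X)
    (d₁ d₂ m k : ℤ) (h₁ : G.IsSubspace S₁) (h₂ : G.IsSubspace S₂)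
    (hd₁ : G.HasDimZ S₁ d₁) (hd₂ : G.HasDimZ S₂ d₂)
    (hm : G.HasDimZ (G.cl (S₁ ∪ S₂)) m) (hk : G.HasDimZ (S₁ ∩ S₂) k) :
    d₁ + d₂ = m + k := by
  classical
  obtain ⟨B₁, hB₁, hB₁c⟩ := hd₁
  obtain ⟨B₂, hB₂, hB₂c⟩ := hd₂
  obtain ⟨M, hM, hMc⟩ := hm
  obtain ⟨B₀, hB₀, hB₀c⟩ := hk
  -- extend B₀ to bases C₁ of S₁ and C₂ of S₂
  obtain ⟨C₁, h₀₁, hC₁sub, hC₁i, hC₁cl'⟩ := G.exists_indep_ext B₁ B₀ hB₀.2.1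
  obtain ⟨C₂, h₀₂, hC₂sub, hC₂i, hC₂cl'⟩ := G.exists_indep_ext B₂ B₀ hB₀.2.1
  have hC₁cl : G.cl ↑C₁ = S₁ := by
    rw [hC₁cl']
    apply subset_antisymm
    · exact cl_subset h₁ (Set.union_subset (hB₀.1.trans Set.inter_subset_left) hB₁.1)
    · rw [← hB₁.2.2]; exact cl_mono Set.subset_union_right
  have hC₂cl : G.cl ↑C₂ = S₂ := by
    rw [hC₂cl']
    apply subset_antisymm
    · exact cl_subset h₂ (Set.union_subset (hB₀.1.trans Set.inter_subset_right) hB₂.1)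
    · rw [← hB₂.2.2]; exact cl_mono Set.subset_union_right
  have hC₁basis : G.IsBasisOf ↑C₁ S₁ := ⟨hC₁cl ▸ G.subset_cl _, hC₁i, hC₁cl⟩
  have hC₂basis : G.IsBasisOf ↑C₂ S₂ := ⟨hC₂cl ▸ G.subset_cl _, hC₂i, hC₂cl⟩
  have hcard₁ : C₁.card = B₁.card := basis_card_eq hC₁basis hB₁
  have hcard₂ : C₂.card = B₂.card := basis_card_eq hC₂basis hB₂
  -- C₁ ∩ C₂ = B₀
  have hInter : (↑C₁ ∩ ↑C₂ : Set X) ⊆ ↑B₀ := by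
    rintro x ⟨hx₁, hx₂⟩
    by_contra hxB₀
    have hxS : x ∈ S₁ ∩ S₂ :=
      ⟨(hC₁cl ▸ G.subset_cl _) hx₁, (hC₂cl ▸ G.subset_cl _) hx₂⟩
    rw [← hB₀.2.2] at hxS
    have : x ∈ G.cl ((↑C₁ : Set X) \ {x}) :=
      cl_mono (Set.subset_diff_singleton (by exact_mod_cast Finset.coe_subset.2 h₀₁) hxB₀) hxS
    exact hC₁i x hx₁ this
  have hInterEq : C₁ ∩ C₂ = B₀ := by
    apply Finset.Subset.antisymm
    · intro x hx
      have := hInter ⟨Finset.mem_coe.2 (Finset.mem_of_mem_inter_left hx),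
        Finset.mem_coe.2 (Finset.mem_of_mem_inter_right hx)⟩
      exact Finset.mem_coe.1 this
    · exact Finset.subset_inter h₀₁ h₀₂
  -- C₁ ∪ C₂ is a basis of the join
  have hjoin : G.cl ↑(C₁ ∪ C₂) = G.cl (S₁ ∪ S₂) := by
    rw [Finset.coe_union, ← G.cl_union_cl_cl (↑C₁) (↑C₂), hC₁cl, hC₂cl]
  have hDi : G.Independent ↑(C₁ ∪ C₂) := by
    intro b hb hmem
    rw [Finset.coe_union] at hb hmem
    rcases hb with hb | hb
    · exact indep_union_aux hP h₁ h₂ hB₀.2.2 hC₁i hC₁cl hC₂i hC₂cl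
        (Finset.coe_subset.2 h₀₁) (Finset.coe_subset.2 h₀₂) hInter hb hmem
    · rw [Set.union_comm] at hmem
      have hInter' : (↑C₂ ∩ ↑C₁ : Set X) ⊆ ↑B₀ := by
        rw [Set.inter_comm]; exact hInter
      have hB₀cl' : G.cl ↑B₀ = S₂ ∩ S₁ := by rw [Set.inter_comm]; exact hB₀.2.2
      exact indep_union_aux hP h₂ h₁ hB₀cl' hC₂i hC₂cl hC₁i hC₁cl
        (Finset.coe_subset.2 h₀₂) (Finset.coe_subset.2 h₀₁) hInter' hb hmem
  have hDbasis : G.IsBasisOf ↑(C₁ ∪ C₂) (G.cl (S₁ ∪ S₂)) :=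
    ⟨hjoin ▸ G.subset_cl _, hDi, hjoin⟩
  have hcardM : M.card = (C₁ ∪ C₂).card := basis_card_eq hM hDbasis
  have hnat : (C₁ ∪ C₂).card + (C₁ ∩ C₂).card = C₁.card + C₂.card :=
    Finset.card_union_add_card_inter C₁ C₂
  rw [hInterEq, hcard₁, hcard₂, ← hcardM] at hnat
  have hz : (M.card : ℤ) + (B₀.card : ℤ) = (B₁.card : ℤ) + (B₂.card : ℤ) := by
    exact_mod_cast hnat
  rw [hB₁c, hB₂c, hMc, hB₀c] at hz
  linarith

end GeometryOn
namespace GeometryOn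

variable {X : Type*} {G : GeometryOn X}

/-- The dimension-formula hypothesis. -/
def DimFormula (G : GeometryOn X) : Prop :=
  ∀ (S₁ S₂ : Set X) (d₁ d₂ m k : ℤ), G.IsSubspace S₁ → G.IsSubspace S₂ →
    G.HasDimZ S₁ d₁ → G.HasDimZ S₂ d₂ →
    G.HasDimZ (G.cl (S₁ ∪ S₂)) m → G.HasDimZ (S₁ ∩ S₂) k →
    d₁ + d₂ = m + k

lemma generatedByLines_of_dim (H : G.DimFormula) : G.GeneratedByLines := by
  intro S
  constructor
  · intro hS x₁ hx₁ x₂ hx₂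
    exact cl_pair_subset hS hx₁ hx₂
  intro hlines
  have key : ∀ n : ℕ, ∀ F : Finset X, F.card ≤ n → ↑F ⊆ S → ∀ z ∈ G.cl ↑F, z ∈ S := by
    intro n
    induction n with
    | zero =>
      intro F hcard _ z hz
      rw [Finset.card_eq_zero.1 (Nat.le_zero.1 hcard), Finset.coe_empty, G.cl_empty] at hz
      exact absurd hz (Set.notMem_empty z)
    | succ n ih =>
      intro F hcard hFS z hz
      classical
      obtain ⟨B, hBF, hBi, hBcl⟩ := G.exists_indep_subset F
      rw [← hBcl] at hz
      have hBS : (↑B : Set X) ⊆ S := (Finset.coe_subset.2 hBF).trans hFS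
      rcases Finset.eq_empty_or_nonempty B with rfl | ⟨a, haB⟩
      · rw [Finset.coe_empty, G.cl_empty] at hz
        exact absurd hz (Set.notMem_empty z)
      by_cases hza : z = a
      · exact hza ▸ hBS (Finset.mem_coe.2 haB)
      set F' := B.erase a with hF'
      have hBposcard : 0 < B.card := Finset.card_pos.2 ⟨a, haB⟩
      have hBlecard : B.card ≤ n + 1 := (Finset.card_le_card hBF).trans hcard
      have hF'card : F'.card ≤ n := by
        rw [hF', Finset.card_erase_of_mem haB]
        omega
      have hF'S : (↑F' : Set X) ⊆ S :=
        (Finset.coe_subset.2 (Finset.erase_subset a B)).trans hBS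
      have hcoeF' : (↑F' : Set X) = ↑B \ {a} := by
        rw [hF', Finset.coe_erase]
      have hd₁ : G.HasDimZ (G.cl ↑F') ((F'.card : ℤ) - 1) := by
        refine ⟨F', ⟨G.subset_cl _, ?_, rfl⟩, by ring⟩
        refine indep_mono hBi ?_
        rw [hcoeF']
        exact Set.diff_subset
      have haz : a ≠ z := fun h => hza h.symm
      have hcoeaz : (↑({a, z} : Finset X) : Set X) = ({a, z} : Set X) := by simp
      have hd₂ : G.HasDimZ (G.cl {a, z}) 1 := by
        refine ⟨{a, z}, ⟨?_, ?_, ?_⟩, ?_⟩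
        · rw [hcoeaz]; exact G.subset_cl _
        · rw [hcoeaz]; exact indep_pair haz
        · rw [hcoeaz]
        · rw [Finset.card_insert_of_notMem (by simp [haz]), Finset.card_singleton]
          norm_num
      have hjoin : G.cl (G.cl ↑F' ∪ G.cl {a, z}) = G.cl ↑B := by
        rw [G.cl_union_cl_cl]
        apply subset_antisymm
        · apply cl_subset (G.cl_isSubspace (↑B : Set X))
          apply Set.union_subset
          · exact (Finset.coe_subset.2 (Finset.erase_subset a B)).trans (G.subset_cl _)
          · exact Set.insert_subset (G.subset_cl _ (Finset.mem_coe.2 haB))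
              (Set.singleton_subset_iff.2 hz)
        · apply cl_mono
          intro t ht
          by_cases hta : t = a
          · exact Set.mem_union_right _ (hta ▸ Set.mem_insert a {z})
          · exact Set.mem_union_left _
              (by rw [hcoeF']; exact ⟨ht, by simpa using hta⟩)
      have hm : G.HasDimZ (G.cl (G.cl ↑F' ∪ G.cl {a, z})) ((B.card : ℤ) - 1) := by
        refine ⟨B, ⟨?_, hBi, hjoin.symm⟩, by ring⟩
        rw [hjoin]
        exact G.subset_cl _
      have hT : G.IsSubspace (G.cl ↑F' ∩ G.cl {a, z}) :=
        inter_isSubspace (G.cl_isSubspace _) (G.cl_isSubspace _)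
      obtain ⟨Bt, hBt⟩ := exists_finite_basis hT (F := F') Set.inter_subset_left
      have hk : G.HasDimZ (G.cl ↑F' ∩ G.cl {a, z}) ((Bt.card : ℤ) - 1) :=
        ⟨Bt, hBt, by ring⟩
      have hform := H (G.cl ↑F') (G.cl {a, z}) _ _ _ _
        (G.cl_isSubspace _) (G.cl_isSubspace _) hd₁ hd₂ hm hk
      have hBF'card : (B.card : ℤ) = (F'.card : ℤ) + 1 := by
        rw [hF', Finset.card_erase_of_mem haB]
        omega
      have hBtcard : Bt.card = 1 := by
        have : (Bt.card : ℤ) = 1 := by linarith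
        exact_mod_cast this
      obtain ⟨y, hy⟩ := Finset.card_eq_one.1 hBtcard
      have hyT : y ∈ G.cl ↑F' ∩ G.cl {a, z} := hBt.1 (by rw [hy]; simp)
      have hya : y ≠ a := by
        intro h
        apply hBi a (Finset.mem_coe.2 haB)
        rw [← hcoeF']
        exact h ▸ hyT.1
      have hzy : z ∈ G.cl {a, y} := mem_cl_pair_exchange hyT.2 hya
      have hyS : y ∈ S := ih F' hF'card hF'S y hyT.1
      exact hlines a (hFS (hBF haB)) y hyS hzy
  have hcl : G.cl S = S := by
    apply subset_antisymm _ (G.subset_cl S)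
    intro z hz
    obtain ⟨F, h1, h2⟩ := finitary' hz
    exact key F.card F le_rfl h1 z h2
  exact hcl ▸ G.cl_isSubspace S

lemma vy_of_dim (H : G.DimFormula) (a b c p q : X)
    (h1 : a ∉ G.cl {b, c}) (h2 : b ∉ G.cl {a, c}) (h3 : c ∉ G.cl {a, b})
    (hp : p ∈ G.cl {a, b}) (hq : q ∈ G.cl {a, c}) (hpa : p ≠ a) (hqa : q ≠ a)
    (hpq : p ≠ q) : (G.cl {p, q} ∩ G.cl {b, c}).Nonempty := by
  classical
  by_cases hpbc : p ∈ G.cl {b, c}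
  · exact ⟨p, G.mem_cl_pair_left p q, hpbc⟩
  by_cases hqbc : q ∈ G.cl {b, c}
  · exact ⟨q, G.mem_cl_pair_right p q, hqbc⟩
  have hab : a ≠ b := by
    intro h; apply h1; rw [h]; exact G.mem_cl_pair_left b c
  have hac : a ≠ c := by
    intro h; apply h1; rw [h]; exact G.mem_cl_pair_right b c
  have hbc : b ≠ c := by
    intro h; apply h3; rw [← h]; exact G.mem_cl_pair_right a b
  have hpb : p ≠ b := by
    intro h; apply hpbc; rw [h]; exact G.mem_cl_pair_left b c
  have hsub1 : ({a, b} : Set X) ⊆ ({a, b, c} : Set X) := by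
    intro s hs; simp only [Set.mem_insert_iff, Set.mem_singleton_iff] at hs ⊢; tauto
  have hsub2 : ({a, c} : Set X) ⊆ ({a, b, c} : Set X) := by
    intro s hs; simp only [Set.mem_insert_iff, Set.mem_singleton_iff] at hs ⊢; tauto
  have hsub3 : ({b, c} : Set X) ⊆ ({a, b, c} : Set X) := by
    intro s hs; simp only [Set.mem_insert_iff, Set.mem_singleton_iff] at hs ⊢; tauto
  have hjoin : G.cl (G.cl {p, q} ∪ G.cl {b, c}) = G.cl {a, b, c} := by
    rw [G.cl_union_cl_cl]
    apply subset_antisymm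
    · apply cl_subset (G.cl_isSubspace _)
      apply Set.union_subset
      · exact Set.insert_subset (cl_mono hsub1 hp)
          (Set.singleton_subset_iff.2 (cl_mono hsub2 hq))
      · exact hsub3.trans (G.subset_cl _)
    · apply cl_subset (G.cl_isSubspace _)
      have hbmem : b ∈ G.cl ({p, q} ∪ {b, c}) :=
        G.subset_cl _ (Set.mem_union_right _ (Set.mem_insert b {c}))
      have hcmem : c ∈ G.cl ({p, q} ∪ {b, c}) :=
        G.subset_cl _ (Set.mem_union_right _ (Set.mem_insert_of_mem b rfl))
      have hpmem : p ∈ G.cl ({p, q} ∪ {b, c}) :=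
        G.subset_cl _ (Set.mem_union_left _ (Set.mem_insert p {q}))
      have hamem : a ∈ G.cl ({p, q} ∪ {b, c}) := by
        have hp' : p ∈ G.cl {b, a} := by rwa [Set.pair_comm a b] at hp
        have := mem_cl_pair_exchange hp' hpb
        exact cl_pair_subset (G.cl_isSubspace _) hbmem hpmem this
      intro s hs
      rcases hs with rfl | hs
      · exact hamem
      rcases hs with rfl | hs
      · exact hbmem
      · rw [Set.mem_singleton_iff] at hs; subst hs; exact hcmem
  have hcoepq : (↑({p, q} : Finset X) : Set X) = ({p, q} : Set X) := by simp
  have hcoebc : (↑({b, c} : Finset X) : Set X) = ({b, c} : Set X) := by simp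
  have hcoeabc : (↑({a, b, c} : Finset X) : Set X) = ({a, b, c} : Set X) := by simp
  have hd₁ : G.HasDimZ (G.cl {p, q}) 1 := by
    refine ⟨{p, q}, ⟨?_, ?_, ?_⟩, ?_⟩
    · rw [hcoepq]; exact G.subset_cl _
    · rw [hcoepq]; exact indep_pair hpq
    · rw [hcoepq]
    · rw [Finset.card_insert_of_notMem (by simp [hpq]), Finset.card_singleton]; norm_num
  have hd₂ : G.HasDimZ (G.cl {b, c}) 1 := by
    refine ⟨{b, c}, ⟨?_, ?_, ?_⟩, ?_⟩
    · rw [hcoebc]; exact G.subset_cl _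
    · rw [hcoebc]; exact indep_pair hbc
    · rw [hcoebc]
    · rw [Finset.card_insert_of_notMem (by simp [hbc]), Finset.card_singleton]; norm_num
  have hindep : G.Independent ({a, b, c} : Set X) := by
    intro t ht hmem
    rcases ht with rfl | ht
    · apply h1
      refine cl_mono ?_ hmem
      rintro s ⟨hs, hsa⟩
      rcases hs with rfl | hs
      · exact absurd rfl hsa
      · exact hs
    rcases ht with rfl | ht
    · apply h2
      refine cl_mono ?_ hmem
      rintro s ⟨hs, hst⟩
      rcases hs with rfl | hs
      · exact Set.mem_insert s {c}
      rcases hs with rfl | hs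
      · exact absurd rfl hst
      · exact Set.mem_insert_of_mem a hs
    · rw [Set.mem_singleton_iff] at ht; subst ht
      apply h3
      refine cl_mono ?_ hmem
      rintro s ⟨hs, hst⟩
      rcases hs with rfl | hs
      · exact Set.mem_insert s {b}
      rcases hs with rfl | hs
      · exact Set.mem_insert_of_mem a rfl
      · exact absurd hs hst
  have hm : G.HasDimZ (G.cl (G.cl {p, q} ∪ G.cl {b, c})) 2 := by
    refine ⟨{a, b, c}, ⟨?_, ?_, ?_⟩, ?_⟩
    · rw [hcoeabc, hjoin]; exact G.subset_cl _
    · rw [hcoeabc]; exact hindep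
    · rw [hcoeabc, hjoin]
    · rw [Finset.card_insert_of_notMem (by simp [hab, hac]),
        Finset.card_insert_of_notMem (by simp [hbc]), Finset.card_singleton]
      norm_num
  have hT : G.IsSubspace (G.cl {p, q} ∩ G.cl {b, c}) :=
    inter_isSubspace (G.cl_isSubspace _) (G.cl_isSubspace _)
  obtain ⟨Bt, hBt⟩ := exists_finite_basis hT (F := ({b, c} : Finset X))
    (by rw [hcoebc]; exact Set.inter_subset_right)
  have hk : G.HasDimZ (G.cl {p, q} ∩ G.cl {b, c}) ((Bt.card : ℤ) - 1) :=
    ⟨Bt, hBt, by ring⟩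
  have hform := H (G.cl {p, q}) (G.cl {b, c}) _ _ _ _
    (G.cl_isSubspace _) (G.cl_isSubspace _) hd₁ hd₂ hm hk
  have hBtcard : Bt.card = 1 := by
    have : (Bt.card : ℤ) = 1 := by linarith
    exact_mod_cast this
  obtain ⟨t, ht⟩ := Finset.card_eq_one.1 hBtcard
  exact ⟨t, hBt.1 (by rw [ht]; simp)⟩

end GeometryOn

open GeometryOn in
/-- a geometry `X` is a projective space iff the dimension formula
`dim S₁ + dim S₂ = dim (S₁ ∨ S₂) + dim (S₁ ∩ S₂)` holds for all finite-dimensional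
subspaces `S₁, S₂` of `X`. -/
theorem projective_iff_dim_formula {X : Type*} (G : GeometryOn X) :
    G.IsProjective ↔
      ∀ (S₁ S₂ : Set X) (d₁ d₂ m k : ℤ), G.IsSubspace S₁ → G.IsSubspace S₂ →
        G.HasDimZ S₁ d₁ → G.HasDimZ S₂ d₂ →
        G.HasDimZ (G.cl (S₁ ∪ S₂)) m → G.HasDimZ (S₁ ∩ S₂) k →
        d₁ + d₂ = m + k := by
  constructor
  · intro hP S₁ S₂ d₁ d₂ m k h₁ h₂ hd₁ hd₂ hm hk
    exact dim_formula_of_projective hP S₁ S₂ d₁ d₂ m k h₁ h₂ hd₁ hd₂ hm hk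
  · intro H
    exact ⟨generatedByLines_of_dim H, vy_of_dim H⟩
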